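/- The function u: ℝ² → ℝ defined by u(x₁,x₂) = min{x₁, 0} + |x₂| is Lipschitz on ℝ² and satisfies |∇u|(0) = |∇⁻u|(0) = 1, yet there is no function ψ: ℝ² → ℝ differentiable at 0 with u − ψ having a local maximum at 0. -/

import Mathlib

open Filter Topology Set

/-- Sub-slope `|∇⁻u|(x)`. -/
noncomputable def subSlope (u : EuclideanSpace ℝ (Fin 2) → ℝ)
    (x : EuclideanSpace ℝ (Fin 2)) : ℝ :=
  Filter.limsup (fun y => max (u x - u y) 0 / dist x y) (𝓝[≠] x)

/-- Local slope `|∇u|(x)`. -/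
noncomputable def localSlope (u : EuclideanSpace ℝ (Fin 2) → ℝ)
    (x : EuclideanSpace ℝ (Fin 2)) : ℝ :=
  Filter.limsup (fun y => |u y - u x| / dist x y) (𝓝[≠] x)

/-- The function `u(x₁,x₂) = min{x₁,0} + |x₂|` on `ℝ²`. -/
noncomputable def uEx (x : EuclideanSpace ℝ (Fin 2)) : ℝ := min (x 0) 0 + |x 1|

/-!
Since `-|x₁| ≤ min{x₁, 0} ≤ 0 ≤ |x₂|`, we have `|u(x)| ≤ max{|x₁|, |x₂|} ≤ ‖x‖`, so both slope
quotients are at most `1`; they equal `1` along the rays `t e₂` and `-t e₁` (`t > 0`). On the line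
`t e₂` the function `u` is `|t|`, so a `ψ` differentiable at `0` with `u - ψ` maximal there would
have `ψ(t e₂) - ψ(0) ≥ |t|`, forcing its derivative along `e₂` to be both `≥ 1` and `≤ -1`.
-/

lemma limsup_eq_of_eventually_le_of_frequently_ge {ι α : Type*}
    [ConditionallyCompleteLinearOrder α] {l : Filter ι} {f : ι → α} {c : α}
    (hle : ∀ᶠ x in l, f x ≤ c) (hge : ∃ᶠ x in l, c ≤ f x) : limsup f l = c :=
  le_antisymm (limsup_le_of_le (.of_frequently_ge hge) hle)
    (le_limsup_of_frequently_le hge (isBoundedUnder_of_eventually_le hle))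

lemma tendsto_smul_const_nhdsNE {𝕜 E : Type*} [NontriviallyNormedField 𝕜]
    [NormedAddCommGroup E] [NormedSpace 𝕜 E] {v : E} (hv : v ≠ 0) :
    Tendsto (fun t : 𝕜 => t • v) (𝓝[≠] 0) (𝓝[≠] 0) := by
  refine tendsto_nhdsWithin_of_tendsto_nhds_of_eventually_within _ ?_ ?_
  · exact ((continuous_id.smul continuous_const).tendsto' 0 0 (zero_smul 𝕜 v)).mono_left
      nhdsWithin_le_nhds
  · filter_upwards [self_mem_nhdsWithin] with t ht
    exact smul_ne_zero ht hv

lemma limsup_div_norm_eq_one {E : Type*} [NormedAddCommGroup E] [NormedSpace ℝ E]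
    {φ : E → ℝ} (hle : ∀ y, φ y ≤ ‖y‖) {v : E} (hv : v ≠ 0)
    (hray : ∀ t : ℝ, 0 < t → φ (t • v) = ‖t • v‖) :
    limsup (fun y => φ y / ‖y‖) (𝓝[≠] 0) = 1 := by
  refine limsup_eq_of_eventually_le_of_frequently_ge
    (.of_forall fun y => div_le_one_of_le₀ (hle y) (norm_nonneg y)) ?_
  refine ((tendsto_smul_const_nhdsNE hv).mono_left (nhdsGT_le_nhdsNE (0 : ℝ))).frequently
    (Eventually.frequently ?_)
  filter_upwards [self_mem_nhdsWithin] with t (ht : 0 < t)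
  rw [hray t ht, div_self (norm_ne_zero_iff.mpr (smul_ne_zero ht.ne' hv))]

lemma not_isLocalMax_abs_sub {g : ℝ → ℝ} (hg : DifferentiableAt ℝ g 0) :
    ¬ IsLocalMax (fun t => |t| - g t) 0 := by
  intro hmax
  have habs : ∀ᶠ t in 𝓝 0, |t| ≤ g t - g 0 := by
    filter_upwards [hmax] with t ht
    simp only [abs_zero, zero_sub] at ht
    linarith
  have hright : 1 ≤ deriv g 0 := by
    refine ge_of_tendsto hg.hasDerivAt.tendsto_slope_zero_right ?_
    filter_upwards [nhdsWithin_le_nhds habs, self_mem_nhdsWithin] with t ht (htpos : 0 < t)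
    rw [zero_add, smul_eq_mul, ← div_eq_inv_mul, le_div_iff₀ htpos]
    linarith [abs_of_pos htpos]
  have hleft : deriv g 0 ≤ -1 := by
    refine le_of_tendsto hg.hasDerivAt.tendsto_slope_zero_left ?_
    filter_upwards [nhdsWithin_le_nhds habs, self_mem_nhdsWithin] with t ht (htneg : t < 0)
    rw [zero_add, smul_eq_mul, ← div_eq_inv_mul, div_le_iff_of_neg htneg]
    linarith [abs_of_neg htneg]
  linarith

lemma lipschitzWith_uEx : LipschitzWith 2 uEx := by
  have hcoord : ∀ i : Fin 2, LipschitzWith 1 fun x : EuclideanSpace ℝ (Fin 2) => x i :=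
    fun i => by
      simpa [Function.comp_def] using (LipschitzWith.eval i).comp (PiLp.lipschitzWith_ofLp 2 _)
  have habs : LipschitzWith 1 fun x : EuclideanSpace ℝ (Fin 2) => |x 1| := by
    simpa [Function.comp_def] using lipschitzWith_one_norm.comp (hcoord 1)
  rw [← one_add_one_eq_two (R := NNReal)]
  exact ((hcoord 0).min_const 0).add habs

lemma abs_uEx_le_norm (y : EuclideanSpace ℝ (Fin 2)) : |uEx y| ≤ ‖y‖ := by
  have h0 := PiLp.norm_apply_le y 0
  have h1 := PiLp.norm_apply_le y 1
  simp only [Real.norm_eq_abs] at h0 h1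
  rw [uEx, abs_le]
  have hmin : -|y 0| ≤ min (y 0) 0 := le_min (neg_abs_le _) (neg_nonpos.mpr (abs_nonneg _))
  constructor <;> linarith [min_le_right (y 0) 0, abs_nonneg (y 1)]

lemma localSlope_uEx : localSlope uEx 0 = 1 := by
  have hquot : (fun y => |uEx y - uEx 0| / dist 0 y) = fun y => |uEx y| / ‖y‖ := by
    ext y; simp [uEx]
  rw [localSlope, hquot]
  exact limsup_div_norm_eq_one abs_uEx_le_norm (v := EuclideanSpace.single 1 1) (by simp)
    fun t ht => by simp [uEx, norm_smul, abs_of_pos ht]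

lemma subSlope_uEx : subSlope uEx 0 = 1 := by
  have hquot : (fun y => max (uEx 0 - uEx y) 0 / dist 0 y) = fun y => max (-uEx y) 0 / ‖y‖ := by
    ext y; simp [uEx]
  rw [subSlope, hquot]
  exact limsup_div_norm_eq_one
    (fun y => max_le ((neg_le_abs _).trans (abs_uEx_le_norm y)) (norm_nonneg y))
    (v := -EuclideanSpace.single 0 1) (by simp)
    fun t ht => by simp [uEx, norm_smul, ht.le, abs_of_pos ht]

lemma not_exists_differentiableAt_isLocalMax_uEx_sub :
    ¬ ∃ ψ : EuclideanSpace ℝ (Fin 2) → ℝ, DifferentiableAt ℝ ψ 0 ∧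
      IsLocalMax (fun x => uEx x - ψ x) 0 := by
  rintro ⟨ψ, hψ, hmax⟩
  set e : EuclideanSpace ℝ (Fin 2) := EuclideanSpace.single 1 1
  have hline : Differentiable ℝ fun t : ℝ => t • e := by fun_prop
  rw [← zero_smul ℝ e] at hψ hmax
  refine not_isLocalMax_abs_sub (g := fun t => ψ (t • e)) (hψ.comp 0 (hline 0)) ?_
  simpa [Function.comp_def, uEx, e] using hmax.comp_continuous (g := fun t : ℝ => t • e) (b := 0)
    hline.continuous.continuousAt

/-- `u(x₁,x₂) = min{x₁,0} + |x₂|` is Lipschitz on `ℝ²` with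
`|∇u|(0) = |∇⁻u|(0) = 1`, yet no function differentiable at `0` touches `u`
from above at `0`. -/
theorem no_upper_test_example :
    (∃ K : NNReal, LipschitzWith K uEx) ∧
    localSlope uEx 0 = 1 ∧ subSlope uEx 0 = 1 ∧
    ¬ ∃ ψ : EuclideanSpace ℝ (Fin 2) → ℝ, DifferentiableAt ℝ ψ 0 ∧
      IsLocalMax (fun x => uEx x - ψ x) 0 :=
  ⟨⟨2, lipschitzWith_uEx⟩, localSlope_uEx, subSlope_uEx,
    not_exists_differentiableAt_isLocalMax_uEx_sub⟩
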